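/- arXiv:2507.14356 — 9 statements merged into one kernel-verified Lean document; each statement's English description precedes it below -/
import Mathlib

section
/- If u, v ∈ ℝ^n satisfy π(Φ(u)) = π(Φ(v)), then there exists x ∈ φ⁻¹(ℤ^k) such that Φ(u) = Φ(v + x); in particular u and v lie in the same Φ-stratum of ℝ^n/φ⁻¹(ℤ^k). -/
/-- The linear map `φ : ℝⁿ → ℝᵏ` given by pairing with the integer vectors `v j`. -/
noncomputable def phiMap {n k : ℕ} (v : Fin k → Fin n → ℤ) :
    (Fin n → ℝ) →ₗ[ℝ] (Fin k → ℝ) where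
  toFun u := fun j => ∑ i, u i * (v j i : ℝ)
  map_add' u w := by
    funext j
    simp [add_mul, Finset.sum_add_distrib]
  map_smul' r u := by
    funext j
    simp [Finset.mul_sum, mul_assoc]

/-- The map `Φ : ℝⁿ → ℤᵏ`, `Φ(u)_j = ⌈⟨u, v_j⟩⌉`. -/
noncomputable def PhiMap {n k : ℕ} (v : Fin k → Fin n → ℤ) (u : Fin n → ℝ) : Fin k → ℤ :=
  fun j => ⌈∑ i, u i * (v j i : ℝ)⌉

/-- `ℤᵏ` as an additive subgroup of `ℝᵏ`. -/
def intLattice (k : ℕ) : AddSubgroup (Fin k → ℝ) :=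
  AddSubgroup.pi Set.univ fun _ => AddSubgroup.zmultiples (1 : ℝ)

/-- The subgroup `φ⁻¹(ℤᵏ)` of `ℝⁿ`. -/
noncomputable def latticePre {n k : ℕ} (v : Fin k → Fin n → ℤ) : AddSubgroup (Fin n → ℝ) :=
  (intLattice k).comap (phiMap v).toAddMonoidHom

/-- If `π(Φ(u)) = π(Φ(w))` then there exists `x ∈ φ⁻¹(ℤᵏ)` with `Φ(u) = Φ(w + x)`; in
particular, the classes of `u` and `w` in `ℝⁿ/φ⁻¹(ℤᵏ)` lie in the same `Φ`-stratum. -/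
theorem stmt2 {n k : ℕ} (v : Fin k → Fin n → ℤ) (u w : Fin n → ℝ)
    (h : (LinearMap.range (phiMap v)).mkQ (fun j => (PhiMap v u j : ℝ)) =
         (LinearMap.range (phiMap v)).mkQ (fun j => (PhiMap v w j : ℝ))) :
    (∃ x ∈ latticePre v, PhiMap v u = PhiMap v (w + x)) ∧
    (QuotientAddGroup.mk u : (Fin n → ℝ) ⧸ latticePre v) ∈
      (QuotientAddGroup.mk '' {y : Fin n → ℝ | PhiMap v y = PhiMap v u}) ∧
    (QuotientAddGroup.mk w : (Fin n → ℝ) ⧸ latticePre v) ∈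
      (QuotientAddGroup.mk '' {y : Fin n → ℝ | PhiMap v y = PhiMap v u}) := by
  -- from h, the difference of ceilings lies in range φ
  have hmem : ((fun j => (PhiMap v u j : ℝ)) - fun j => (PhiMap v w j : ℝ)) ∈
      LinearMap.range (phiMap v) := by
    exact (Submodule.Quotient.eq _).mp h
  obtain ⟨x, hx⟩ := hmem
  have hφx : ∀ j, (∑ i, x i * (v j i : ℝ)) = (PhiMap v u j : ℝ) - (PhiMap v w j : ℝ) := by
    intro j
    have := congrFun hx j
    simpa [phiMap] using this
  have hxlat : x ∈ latticePre v := by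
    intro j _
    exact ⟨PhiMap v u j - PhiMap v w j, by simp [phiMap, hφx j]⟩
  have hΦ : PhiMap v u = PhiMap v (w + x) := by
    funext j
    have : (∑ i, (w + x) i * (v j i : ℝ)) =
        (∑ i, w i * (v j i : ℝ)) + ((PhiMap v u j : ℝ) - (PhiMap v w j : ℝ)) := by
      rw [← hφx j, ← Finset.sum_add_distrib]
      simp [add_mul]
    simp only [PhiMap] at this ⊢
    rw [this, show ((⌈∑ i, u i * (v j i : ℝ)⌉ : ℝ) - (⌈∑ i, w i * (v j i : ℝ)⌉ : ℝ)) =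
      ((⌈∑ i, u i * (v j i : ℝ)⌉ - ⌈∑ i, w i * (v j i : ℝ)⌉ : ℤ) : ℝ) by push_cast; ring,
      Int.ceil_add_intCast]
    omega
  refine ⟨⟨x, hxlat, hΦ⟩, ⟨u, rfl, rfl⟩, ⟨w + x, hΦ.symm, ?_⟩⟩
  exact (QuotientAddGroup.eq.mpr (by simpa using hxlat)).symm
end

section
/- For every p ∈ Z ∩ π(ℤ^k) there exists y ∈ ℝ^n with π(Φ(y)) = p; that is, π ∘ Φ maps ℝ^n onto the set of lattice points of the half-open zonotope Z. -/
/-- Every lattice point `p ∈ Z ∩ π(ℤᵏ)` of the half-open zonotope is of the form `π(Φ(y))`. -/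
theorem stmt3 {n k : ℕ} (v : Fin k → Fin n → ℤ) (p : (Fin k → ℝ) ⧸ LinearMap.range (phiMap v))
    (hp : p ∈ ((LinearMap.range (phiMap v)).mkQ '' {x : Fin k → ℝ | ∀ j, x j ∈ Set.Ico (0 : ℝ) 1})
          ∩ ((LinearMap.range (phiMap v)).mkQ '' {x : Fin k → ℝ | ∀ j, ∃ m : ℤ, x j = (m : ℝ)})) :
    ∃ y : Fin n → ℝ, (LinearMap.range (phiMap v)).mkQ (fun j => (PhiMap v y j : ℝ)) = p := by
  obtain ⟨⟨x, hx, hxp⟩, ⟨w, hw, hwp⟩⟩ := hp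
  -- x - w is in the range of φ
  have hmem : x - w ∈ LinearMap.range (phiMap v) := by
    exact (Submodule.Quotient.eq _).mp (hxp.trans hwp.symm)
  obtain ⟨u, hu⟩ := hmem
  refine ⟨-u, ?_⟩
  have hfun : (fun j => ((PhiMap v (-u) j : ℤ) : ℝ)) = w := by
    funext j
    have huj : (phiMap v) u j = x j - w j := by rw [hu]; rfl
    have huj' : ∑ i, (-u) i * (v j i : ℝ) = w j - x j := by
      have : ∑ i, (-u) i * (v j i : ℝ) = -∑ i, u i * (v j i : ℝ) := by
        simp [neg_mul, Finset.sum_neg_distrib]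
      rw [this]
      have : (phiMap v) u j = ∑ i, u i * (v j i : ℝ) := rfl
      rw [← this, huj]; ring
    obtain ⟨m, hm⟩ := hw j
    have hx0 := hx j
    unfold PhiMap
    rw [huj', hm]
    have : ⌈(m : ℝ) - x j⌉ = m := by
      rw [Int.ceil_eq_iff]
      exact ⟨by linarith [hx0.2], by linarith [hx0.1]⟩
    rw [this]
  rw [hfun, hwp]
end

section
/- The assignment S_c ↦ π(c) is a well-defined bijection from the set of Φ-strata onto the lattice points of the half-open zonotope: there is a bijection β from 𝒮 = { S ⊆ ℝ^n/φ⁻¹(ℤ^k) : ∃ c ∈ ℤ^k, S̃_c ≠ ∅ and S = S_c } onto Z ∩ π(ℤ^k) such that β(S_c) = π(c) whenever S̃_c ≠ ∅. -/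
/-!
For `w ∈ φ⁻¹(ℤᵏ)` with `φ w = m` we have `Φ (u + w) = Φ u + m`, so translating by `w` carries
`S̃_c` onto `S̃_{c+m}`. Hence two nonempty strata agree exactly when their labels differ by an
integer vector in `im φ`, i.e. when `π c = π c'`, and `S_c ↦ π c` is well defined and injective.
If `Φ u = c` then `c - φ u ∈ [0,1)ᵏ`, so `π c` lies in `Z`; conversely if `π c = π x` with
`x ∈ [0,1)ᵏ`, then `c - x = φ u` for some `u`, and `Φ u = c`.
-/

lemma Function.FactorsThrough.bijOn_extend_range {ι α γ : Type*} {f : ι → α} {g : ι → γ}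
    (hgf : g.FactorsThrough f) (hfg : f.FactorsThrough g) (e : α → γ) :
    Set.BijOn (Function.extend f g e) (Set.range f) (Set.range g) := by
  refine ⟨?_, ?_, ?_⟩
  · rintro _ ⟨i, rfl⟩
    exact ⟨i, (hgf.extend_apply e i).symm⟩
  · rintro _ ⟨i, rfl⟩ _ ⟨j, rfl⟩ h
    rw [hgf.extend_apply, hgf.extend_apply] at h
    exact hfg h
  · rintro _ ⟨i, rfl⟩
    exact ⟨f i, ⟨i, rfl⟩, hgf.extend_apply e i⟩

namespace PhiMap

variable {n k : ℕ} (v : Fin k → Fin n → ℤ)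

abbrev stratum (c : Fin k → ℤ) : Set ((Fin n → ℝ) ⧸ latticePre v) :=
  QuotientAddGroup.mk '' {y : Fin n → ℝ | PhiMap v y = c}

lemma apply_eq_ceil (u : Fin n → ℝ) (j : Fin k) : PhiMap v u j = ⌈phiMap v u j⌉ := rfl

lemma mem_latticePre_iff {w : Fin n → ℝ} :
    w ∈ latticePre v ↔ ∃ m : Fin k → ℤ, phiMap v w = fun j => (m j : ℝ) := by
  simp only [latticePre, AddSubgroup.mem_comap, intLattice, AddSubgroup.mem_pi, Set.mem_univ,
    forall_true_left, AddSubgroup.mem_zmultiples_iff, zsmul_eq_mul, mul_one, funext_iff]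
  exact ⟨fun h => ⟨fun j => (h j).choose, fun j => (h j).choose_spec.symm⟩,
    fun ⟨m, hm⟩ j => ⟨m j, (hm j).symm⟩⟩

lemma add_of_phiMap_eq_intCast {w : Fin n → ℝ} {m : Fin k → ℤ}
    (hw : phiMap v w = fun j => (m j : ℝ)) (u : Fin n → ℝ) :
    PhiMap v (u + w) = PhiMap v u + m := by
  funext j
  simp only [apply_eq_ceil, map_add, Pi.add_apply, hw, Int.ceil_add_intCast]

lemma stratum_add_of_phiMap_eq_intCast {w : Fin n → ℝ} {m : Fin k → ℤ}
    (hw : phiMap v w = fun j => (m j : ℝ)) (c : Fin k → ℤ) :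
    stratum v (c + m) = stratum v c := by
  have hwL : w ∈ latticePre v := (mem_latticePre_iff v).2 ⟨m, hw⟩
  have hnegw : phiMap v (-w) = fun j => ((-m) j : ℝ) := by
    simp only [map_neg, hw, Pi.neg_apply, Int.cast_neg]; rfl
  ext z
  constructor
  · rintro ⟨y, hy, rfl⟩
    refine ⟨y + -w, ?_, ?_⟩
    · change PhiMap v (y + -w) = c
      rw [add_of_phiMap_eq_intCast v hnegw, (hy : PhiMap v y = c + m), add_neg_cancel_right]
    · simpa [QuotientAddGroup.eq] using hwL
  · rintro ⟨y, hy, rfl⟩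
    refine ⟨y + w, ?_, ?_⟩
    · change PhiMap v (y + w) = c + m
      rw [add_of_phiMap_eq_intCast v hw, (hy : PhiMap v y = c)]
    · simpa [QuotientAddGroup.eq] using neg_mem hwL

variable {v}

lemma stratum_eq_of_mkQ_eq {c c' : Fin k → ℤ}
    (h : (LinearMap.range (phiMap v)).mkQ (fun j => (c j : ℝ)) =
      (LinearMap.range (phiMap v)).mkQ (fun j => (c' j : ℝ))) :
    stratum v c = stratum v c' := by
  obtain ⟨w, hw⟩ := (Submodule.Quotient.eq _).1 h
  have hw' : phiMap v w = fun j => ((c - c') j : ℝ) := by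
    rw [hw]; funext j; simp
  rw [← stratum_add_of_phiMap_eq_intCast v hw' c', add_sub_cancel]

lemma mkQ_eq_of_stratum_eq {c c' : Fin k → ℤ} (hc : {y : Fin n → ℝ | PhiMap v y = c}.Nonempty)
    (h : stratum v c = stratum v c') :
    (LinearMap.range (phiMap v)).mkQ (fun j => (c j : ℝ)) =
      (LinearMap.range (phiMap v)).mkQ (fun j => (c' j : ℝ)) := by
  obtain ⟨x, hx⟩ := hc
  obtain ⟨y, hy, hyx⟩ : (x : (Fin n → ℝ) ⧸ latticePre v) ∈ stratum v c' := h ▸ ⟨x, hx, rfl⟩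
  obtain ⟨m, hm⟩ := (mem_latticePre_iff v).1 (QuotientAddGroup.eq.1 hyx)
  have hcm : c = c' + m := by
    rw [← hx, ← hy, ← add_of_phiMap_eq_intCast v hm, add_neg_cancel_left]
  refine (Submodule.Quotient.eq _).2 ⟨-y + x, ?_⟩
  rw [hm, hcm]
  funext j
  simp

lemma mkQ_mem_mkQ_Ico_of_nonempty {c : Fin k → ℤ}
    (hc : {y : Fin n → ℝ | PhiMap v y = c}.Nonempty) :
    (LinearMap.range (phiMap v)).mkQ (fun j => (c j : ℝ)) ∈
      (LinearMap.range (phiMap v)).mkQ '' {x : Fin k → ℝ | ∀ j, x j ∈ Set.Ico (0 : ℝ) 1} := by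
  obtain ⟨u, hu⟩ := hc
  refine ⟨(fun j => (c j : ℝ)) - phiMap v u, fun j => ?_, ?_⟩
  · have hceil : (c j : ℝ) - 1 < phiMap v u j ∧ phiMap v u j ≤ c j :=
      Int.ceil_eq_iff.1 (congrFun hu j)
    constructor <;> simp only [Pi.sub_apply] <;> linarith
  · exact (Submodule.Quotient.eq _).2 ⟨-u, by simp⟩

lemma nonempty_of_mkQ_eq {c : Fin k → ℤ} {x : Fin k → ℝ} (hx : ∀ j, x j ∈ Set.Ico (0 : ℝ) 1)
    (h : (LinearMap.range (phiMap v)).mkQ x =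
      (LinearMap.range (phiMap v)).mkQ (fun j => (c j : ℝ))) :
    {y : Fin n → ℝ | PhiMap v y = c}.Nonempty := by
  obtain ⟨u, hu⟩ := (Submodule.Quotient.eq _).1 h.symm
  refine ⟨u, funext fun j => ?_⟩
  rw [apply_eq_ceil, Int.ceil_eq_iff]
  have huj : phiMap v u j = c j - x j := congrFun hu j
  constructor <;> linarith [(hx j).1, (hx j).2]

lemma mkQ_Ico_inter_mkQ_lattice_eq_range :
    (LinearMap.range (phiMap v)).mkQ '' {x : Fin k → ℝ | ∀ j, x j ∈ Set.Ico (0 : ℝ) 1} ∩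
        (LinearMap.range (phiMap v)).mkQ '' {x : Fin k → ℝ | ∀ j, ∃ m : ℤ, x j = m} =
      Set.range fun c : {c : Fin k → ℤ // {y : Fin n → ℝ | PhiMap v y = c}.Nonempty} =>
        (LinearMap.range (phiMap v)).mkQ (fun j => (c.1 j : ℝ)) := by
  ext z
  constructor
  · rintro ⟨⟨x, hx, rfl⟩, y, hy, hyx⟩
    choose c hc using hy
    obtain rfl : y = fun j => (c j : ℝ) := funext hc
    exact ⟨⟨c, nonempty_of_mkQ_eq hx hyx.symm⟩, hyx⟩
  · rintro ⟨c, rfl⟩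
    exact ⟨mkQ_mem_mkQ_Ico_of_nonempty c.2, _, fun j => ⟨c.1 j, rfl⟩, rfl⟩

end PhiMap

/-- The assignment `S_c ↦ π(c)` is a well-defined bijection from the set of `Φ`-strata of
`ℝⁿ/φ⁻¹(ℤᵏ)` onto the lattice points `Z ∩ π(ℤᵏ)` of the half-open zonotope. -/
theorem stmt4 {n k : ℕ} (v : Fin k → Fin n → ℤ) :
    ∃ β : Set ((Fin n → ℝ) ⧸ latticePre v) → (Fin k → ℝ) ⧸ LinearMap.range (phiMap v),
      Set.BijOn β
        {S : Set ((Fin n → ℝ) ⧸ latticePre v) | ∃ c : Fin k → ℤ,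
          ({y : Fin n → ℝ | PhiMap v y = c}).Nonempty ∧
          S = QuotientAddGroup.mk '' {y : Fin n → ℝ | PhiMap v y = c}}
        (((LinearMap.range (phiMap v)).mkQ '' {x : Fin k → ℝ | ∀ j, x j ∈ Set.Ico (0 : ℝ) 1}) ∩
         ((LinearMap.range (phiMap v)).mkQ '' {x : Fin k → ℝ | ∀ j, ∃ m : ℤ, x j = (m : ℝ)})) ∧
      ∀ c : Fin k → ℤ, ({y : Fin n → ℝ | PhiMap v y = c}).Nonempty →
        β (QuotientAddGroup.mk '' {y : Fin n → ℝ | PhiMap v y = c}) =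
          (LinearMap.range (phiMap v)).mkQ (fun j => (c j : ℝ)) := by
  let f : {c : Fin k → ℤ // {y | PhiMap v y = c}.Nonempty} → _ := fun c => PhiMap.stratum v c.1
  let g : {c : Fin k → ℤ // {y | PhiMap v y = c}.Nonempty} → _ :=
    fun c => (LinearMap.range (phiMap v)).mkQ (fun j => (c.1 j : ℝ))
  have hgf : g.FactorsThrough f := fun c _ h => PhiMap.mkQ_eq_of_stratum_eq c.2 h
  have hfg : f.FactorsThrough g := fun _ _ h => PhiMap.stratum_eq_of_mkQ_eq h
  have hdom : {S | ∃ c, {y | PhiMap v y = c}.Nonempty ∧ S = PhiMap.stratum v c} =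
      Set.range f := by
    ext S
    exact ⟨fun ⟨c, hc, hS⟩ => ⟨⟨c, hc⟩, hS.symm⟩, fun ⟨c, hS⟩ => ⟨c.1, c.2, hS.symm⟩⟩
  refine ⟨Function.extend f g 0, ?_, fun c hc => hgf.extend_apply 0 ⟨c, hc⟩⟩
  rw [hdom, PhiMap.mkQ_Ico_inter_mkQ_lattice_eq_range]
  exact hgf.bijOn_extend_range hfg 0
end

section
/- Let c ∈ ℤ^k with S̃_c ≠ ∅, let p = π(c), and let F_S = { x ∈ [0,1)^k : x_j = 0 for all j ∈ J_c }. Then π(F_S) is the minimal face of Z containing p: π(F_S) is an extreme subset of Z containing p, and π(F_S) ⊆ F for every extreme subset F of Z with p ∈ F. -/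
/-!
The box points lying over `p = π c` are exactly the `c - φ y` with `y ∈ S̃_c`, and such a
coordinate `c_j - ⟨y, v_j⟩ ∈ [0, 1)` vanishes iff `⟨y, v_j⟩ ∈ ℤ`; so `J_c` is the set of
coordinates vanishing on this fiber `A`. Averaging points of the convex set `A` gives `w ∈ A`
positive off `J_c`, and `w` can be moved a little in any direction that is nonnegative on `J_c`
without leaving the box. Moving from `w` along `x - f` shows that a box point `x` over `π f`,
`f ∈ F_S`, lies in `F_S`; as `F_S` is a face of the box, `π(F_S)` is a face of `Z`. Moving from
`w` away from `f ∈ F_S` puts `p` inside an open segment ending at `π f`, which gives minimality.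
-/

open Set Filter Topology

section Extreme

variable {𝕜 E F : Type*} {A B : Set E}

theorem IsExtreme.image_linearMap [Semiring 𝕜] [PartialOrder 𝕜] [AddCommMonoid E]
    [AddCommMonoid F] [Module 𝕜 E] [Module 𝕜 F] (f : E →ₗ[𝕜] F) (hA : Convex 𝕜 A)
    (hAB : IsExtreme 𝕜 A B) (hsat : ∀ x ∈ A, f x ∈ f '' B → x ∈ B) :
    IsExtreme 𝕜 (f '' A) (f '' B) := by
  refine ⟨image_mono hAB.subset, ?_⟩
  rintro _ ⟨x, hx, rfl⟩ _ ⟨y, hy, rfl⟩ z hz ⟨a, b, ha, hb, hab, rfl⟩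
  have hxy : a • x + b • y ∈ B :=
    hsat _ (hA hx hy ha.le hb.le hab) (by rwa [map_add, map_smul, map_smul])
  exact ⟨x, hAB.left_mem_of_mem_openSegment hx hy hxy ⟨a, b, ha, hb, hab, rfl⟩, rfl⟩

/-- `x` lies in the open segment from `y` to `x + ε • (x - y)`. -/
theorem IsExtreme.mem_of_add_smul_sub_mem [Field 𝕜] [LinearOrder 𝕜] [IsStrictOrderedRing 𝕜]
    [AddCommGroup E] [Module 𝕜 E] (h : IsExtreme 𝕜 A B) {x y : E} (hx : x ∈ B) (hy : y ∈ A)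
    {ε : 𝕜} (hε : 0 < ε) (hxy : x + ε • (x - y) ∈ A) : y ∈ B := by
  refine h.right_mem_of_mem_openSegment hxy hy hx
    ⟨(1 + ε)⁻¹, ε / (1 + ε), by positivity, by positivity, by field_simp, ?_⟩
  have : (1 + ε) ≠ 0 := by positivity
  match_scalars
  · field_simp
  · ring

end Extreme

section UnitBox

variable {ι : Type*}

def unitBox (ι : Type*) : Set (ι → ℝ) := {x | ∀ j, x j ∈ Ico (0 : ℝ) 1}

def coordFace (J : Set ι) : Set (ι → ℝ) := {x ∈ unitBox ι | ∀ j ∈ J, x j = 0}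

def zeroCoords (A : Set (ι → ℝ)) : Set ι := {j | ∀ x ∈ A, x j = 0}

theorem convex_unitBox : Convex ℝ (unitBox ι) :=
  fun _ hx _ hy _ _ ha hb hab j => convex_Ico (0 : ℝ) 1 (hx j) (hy j) ha hb hab

theorem abs_sub_lt_one_of_mem_unitBox {x y : ι → ℝ} (hx : x ∈ unitBox ι) (hy : y ∈ unitBox ι)
    (j : ι) : |x j - y j| < 1 :=
  abs_sub_lt_iff.2 ⟨by linarith [(hx j).2, (hy j).1], by linarith [(hx j).1, (hy j).2]⟩

theorem isExtreme_coordFace (J : Set ι) : IsExtreme ℝ (unitBox ι) (coordFace J) := by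
  refine ⟨fun x hx => hx.1, ?_⟩
  rintro x hx y hy z hz ⟨a, b, ha, hb, -, rfl⟩
  refine ⟨hx, fun j hj => ?_⟩
  have hzj : a * x j + b * y j = 0 := hz.2 j hj
  nlinarith [(hx j).1, (hy j).1]

theorem exists_pos_forall_add_smul_mem_unitBox [Finite ι] {w : ι → ℝ} (hw : w ∈ unitBox ι) :
    ∃ ε : ℝ, 0 < ε ∧ ∀ d : ι → ℝ, (∀ j, |d j| < 1) → (∀ j, w j = 0 → 0 ≤ d j) →
      w + ε • d ∈ unitBox ι := by
  have hsmall : ∀ j, ∀ᶠ ε in 𝓝 (0 : ℝ), ε ≤ 1 - w j ∧ (w j = 0 ∨ ε ≤ w j) := by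
    intro j
    have hlt := eventually_le_nhds (sub_pos.2 (hw j).2)
    rcases (hw j).1.eq_or_lt with h | h
    · filter_upwards [hlt] with ε h1 using ⟨h1, .inl h.symm⟩
    · filter_upwards [hlt, eventually_le_nhds h] with ε h1 h2 using ⟨h1, .inr h2⟩
  obtain ⟨ε, hε, hε0⟩ :=
    ((eventually_all.2 hsmall).filter_mono nhdsWithin_le_nhds |>.and
      (self_mem_nhdsWithin : ∀ᶠ ε in 𝓝[>] (0 : ℝ), 0 < ε)).exists
  refine ⟨ε, hε0, fun d hd hd0 j => ?_⟩
  obtain ⟨hd1, hd2⟩ := abs_lt.1 (hd j)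
  show w j + ε * d j ∈ Ico 0 1
  rcases (hε j).2 with h | h
  · have := hd0 j h
    constructor <;> nlinarith [(hε j).1]
  · constructor <;> nlinarith [(hε j).1]

theorem Convex.exists_mem_forall_pos_of_notMem_zeroCoords [Finite ι] {A : Set (ι → ℝ)}
    (hA : Convex ℝ A) (hne : A.Nonempty) (hA0 : ∀ x ∈ A, ∀ j, 0 ≤ x j) :
    ∃ w ∈ A, ∀ j ∉ zeroCoords A, 0 < w j := by
  classical
  have := Fintype.ofFinite ι
  suffices ∀ s : Finset ι, ∃ w ∈ A, ∀ j ∈ s, j ∉ zeroCoords A → 0 < w j by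
    obtain ⟨w, hwA, hw⟩ := this Finset.univ
    exact ⟨w, hwA, fun j => hw j (Finset.mem_univ j)⟩
  intro s
  induction s using Finset.induction_on with
  | empty =>
    obtain ⟨x, hx⟩ := hne
    exact ⟨x, hx, by simp⟩
  | insert j s _ ih =>
    obtain ⟨w, hwA, hw⟩ := ih
    by_cases hjZ : j ∈ zeroCoords A
    · refine ⟨w, hwA, fun i hi hiZ => hw i ?_ hiZ⟩
      exact (Finset.mem_insert.1 hi).resolve_left (by rintro rfl; exact hiZ hjZ)
    obtain ⟨g, hgA, hgj⟩ : ∃ g ∈ A, g j ≠ 0 := by simpa [zeroCoords] using hjZ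
    refine ⟨(1 / 2 : ℝ) • w + (1 / 2 : ℝ) • g, hA hwA hgA (by norm_num) (by norm_num) (by norm_num),
      fun i hi hiZ => ?_⟩
    simp only [Pi.add_apply, Pi.smul_apply, smul_eq_mul]
    rcases Finset.mem_insert.1 hi with rfl | hi
    · linarith [hA0 w hwA i, (hA0 g hgA i).lt_of_ne' hgj]
    · linarith [hA0 g hgA i, hw i hi hiZ]

end UnitBox

section BoxFiber

variable {ι : Type*} (V : Submodule ℝ (ι → ℝ)) (c : ι → ℝ)

def boxFiber : Set (ι → ℝ) := {x ∈ unitBox ι | V.mkQ x = V.mkQ c}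

theorem convex_boxFiber : Convex ℝ (boxFiber V c) :=
  convex_unitBox.inter ((convex_singleton (V.mkQ c)).linear_preimage V.mkQ)

variable {V c}

/-- `w` is taken positive off the common zero coordinates of the fiber. -/
theorem exists_mem_boxFiber_forall_add_smul_mem_unitBox [Finite ι] (hne : (boxFiber V c).Nonempty) :
    ∃ w ∈ boxFiber V c, ∃ ε : ℝ, 0 < ε ∧ ∀ d : ι → ℝ, (∀ j, |d j| < 1) →
      (∀ j ∈ zeroCoords (boxFiber V c), 0 ≤ d j) → w + ε • d ∈ unitBox ι := by
  obtain ⟨w, hw, hpos⟩ := (convex_boxFiber V c).exists_mem_forall_pos_of_notMem_zeroCoords hne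
    fun x hx j => (hx.1 j).1
  obtain ⟨ε, hε, hbox⟩ := exists_pos_forall_add_smul_mem_unitBox hw.1
  refine ⟨w, hw, ε, hε, fun d hd hdJ => hbox d hd fun j hj => hdJ j ?_⟩
  by_contra hjJ
  exact (hpos j hjJ).ne' hj

theorem mem_coordFace_of_mkQ_eq [Finite ι] (hne : (boxFiber V c).Nonempty) {x f : ι → ℝ}
    (hx : x ∈ unitBox ι) (hf : f ∈ coordFace (zeroCoords (boxFiber V c)))
    (hxf : V.mkQ x = V.mkQ f) : x ∈ coordFace (zeroCoords (boxFiber V c)) := by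
  obtain ⟨w, hw, ε, hε, hbox⟩ := exists_mem_boxFiber_forall_add_smul_mem_unitBox hne
  have hu : w + ε • (x - f) ∈ boxFiber V c := by
    refine ⟨hbox _ (abs_sub_lt_one_of_mem_unitBox hx hf.1) fun j hj => ?_, ?_⟩
    · simp [hf.2 j hj, (hx j).1]
    · rw [map_add, map_smul, map_sub, hxf, sub_self, smul_zero, add_zero, hw.2]
  refine ⟨hx, fun j hj => ?_⟩
  have huj : w j + ε * (x j - f j) = 0 := hj _ hu
  rw [hj w hw, hf.2 j hj] at huj
  simpa [hε.ne'] using huj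

theorem isExtreme_image_mkQ_coordFace [Finite ι] (hne : (boxFiber V c).Nonempty) :
    IsExtreme ℝ (V.mkQ '' unitBox ι) (V.mkQ '' coordFace (zeroCoords (boxFiber V c))) :=
  (isExtreme_coordFace _).image_linearMap V.mkQ convex_unitBox fun _ hx ⟨_, hf, hxf⟩ =>
    mem_coordFace_of_mkQ_eq hne hx hf hxf.symm

theorem mkQ_mem_image_coordFace (hne : (boxFiber V c).Nonempty) :
    V.mkQ c ∈ V.mkQ '' coordFace (zeroCoords (boxFiber V c)) := by
  obtain ⟨x, hx⟩ := hne
  exact ⟨x, ⟨hx.1, fun j hj => hj x hx⟩, hx.2⟩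

theorem image_mkQ_coordFace_subset [Finite ι] (hne : (boxFiber V c).Nonempty)
    {F : Set ((ι → ℝ) ⧸ V)} (hF : IsExtreme ℝ (V.mkQ '' unitBox ι) F) (hcF : V.mkQ c ∈ F) :
    V.mkQ '' coordFace (zeroCoords (boxFiber V c)) ⊆ F := by
  rintro _ ⟨f, hf, rfl⟩
  obtain ⟨w, hw, ε, hε, hbox⟩ := exists_mem_boxFiber_forall_add_smul_mem_unitBox hne
  have hg : w + ε • (w - f) ∈ unitBox ι :=
    hbox _ (abs_sub_lt_one_of_mem_unitBox hw.1 hf.1) fun j hj => by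
      simp [hj w hw, hf.2 j hj]
  refine hF.mem_of_add_smul_sub_mem (hw.2 ▸ hcF) ⟨f, hf.1, rfl⟩ hε ⟨_, hg, ?_⟩
  rw [map_add, map_smul, map_sub]

end BoxFiber

section Zonotope

variable {n k : ℕ} (v : Fin k → Fin n → ℤ) (c : Fin k → ℤ)

theorem phiMap_apply (y : Fin n → ℝ) (j : Fin k) :
    phiMap v y j = ∑ i, y i * (v j i : ℝ) := rfl

theorem PhiMap_eq_iff (y : Fin n → ℝ) :
    PhiMap v y = c ↔ (fun j => (c j : ℝ)) - phiMap v y ∈ unitBox (Fin k) := by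
  refine funext_iff.trans (forall_congr' fun j => ?_)
  rw [PhiMap, Int.ceil_eq_iff, ← phiMap_apply, Pi.sub_apply, mem_Ico]
  constructor <;> rintro ⟨h₁, h₂⟩ <;> constructor <;> linarith

theorem boxFiber_range_phiMap :
    boxFiber (LinearMap.range (phiMap v)) (fun j => (c j : ℝ)) =
      (fun y => (fun j => (c j : ℝ)) - phiMap v y) '' {y | PhiMap v y = c} := by
  ext x
  simp only [boxFiber, Submodule.mkQ_apply, Submodule.Quotient.eq, LinearMap.mem_range,
    mem_ofPred_eq, mem_image, PhiMap_eq_iff]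
  constructor
  · rintro ⟨hx, u, hu⟩
    exact ⟨-u, by simpa [hu] using hx, by simp [hu]⟩
  · rintro ⟨y, hy, rfl⟩
    exact ⟨hy, -y, by simp⟩

theorem zeroCoords_boxFiber_range_phiMap :
    zeroCoords (boxFiber (LinearMap.range (phiMap v)) (fun j => (c j : ℝ))) =
      {j | ∀ y ∈ {y : Fin n → ℝ | PhiMap v y = c}, ∃ m : ℤ, phiMap v y j = (m : ℝ)} := by
  rw [boxFiber_range_phiMap]
  ext j
  simp only [zeroCoords, forall_mem_image, mem_ofPred_eq, Pi.sub_apply, sub_eq_zero]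
  refine forall₂_congr fun y hy => ⟨fun h => ⟨c j, h.symm⟩, fun ⟨m, hm⟩ => ?_⟩
  have hceil : ⌈phiMap v y j⌉ = c j := congrFun hy j
  rw [hm, Int.ceil_intCast] at hceil
  rw [hm, hceil]

end Zonotope

/-- If `S̃_c ≠ ∅`, `p = π(c)` and `F_S = {x ∈ [0,1)ᵏ : x_j = 0 for j ∈ J_c}`, then `π(F_S)` is
the minimal face of the half-open zonotope `Z` containing `p`: it is an extreme subset of `Z`
containing `p` and is contained in every extreme subset of `Z` containing `p`. -/
theorem stmt6 {n k : ℕ} (v : Fin k → Fin n → ℤ) (c : Fin k → ℤ)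
    (hc : ({y : Fin n → ℝ | PhiMap v y = c}).Nonempty) :
    let π := (LinearMap.range (phiMap v)).mkQ
    let Z := π '' {x : Fin k → ℝ | ∀ j, x j ∈ Set.Ico (0 : ℝ) 1}
    let J : Set (Fin k) :=
      {j | ∀ y ∈ {y : Fin n → ℝ | PhiMap v y = c}, ∃ m : ℤ, phiMap v y j = (m : ℝ)}
    let FS : Set (Fin k → ℝ) := {x | (∀ j, x j ∈ Set.Ico (0 : ℝ) 1) ∧ ∀ j ∈ J, x j = 0}
    let p := π (fun j => (c j : ℝ))
    IsExtreme ℝ Z (π '' FS) ∧ p ∈ π '' FS ∧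
      ∀ F : Set ((Fin k → ℝ) ⧸ LinearMap.range (phiMap v)),
        IsExtreme ℝ Z F → p ∈ F → π '' FS ⊆ F := by
  intro π Z J FS p
  have hne : (boxFiber (LinearMap.range (phiMap v)) (fun j => (c j : ℝ))).Nonempty := by
    rw [boxFiber_range_phiMap]
    exact hc.image _
  have hFS :
      FS = coordFace (zeroCoords (boxFiber (LinearMap.range (phiMap v)) fun j => (c j : ℝ))) := by
    rw [zeroCoords_boxFiber_range_phiMap]
    rfl
  rw [hFS]
  exact ⟨isExtreme_image_mkQ_coordFace hne, mkQ_mem_image_coordFace hne,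
    fun F hF hpF => image_mkQ_coordFace_subset hne hF hpF⟩
end

section
/- Let c ∈ ℤ^k with S̃_c ≠ ∅ and let z ∈ [0,1)^k satisfy π(z) = π(c). Then there exists y' ∈ S̃_c with c − φ(y') = z; in other words, every representative of the lattice point π(c) inside the half-open cube is realized as Φ(y') − φ(y') for some point y' of the lifted stratum. -/
/-- If `S̃_c ≠ ∅` and `z ∈ [0,1)ᵏ` satisfies `π(z) = π(c)`, then there exists `y' ∈ S̃_c` with
`c − φ(y') = z`. -/
theorem stmt7 {n k : ℕ} (v : Fin k → Fin n → ℤ) (c : Fin k → ℤ)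
    (hc : ({y : Fin n → ℝ | PhiMap v y = c}).Nonempty)
    (z : Fin k → ℝ) (hz : ∀ j, z j ∈ Set.Ico (0 : ℝ) 1)
    (hπ : (LinearMap.range (phiMap v)).mkQ z =
          (LinearMap.range (phiMap v)).mkQ (fun j => (c j : ℝ))) :
    ∃ y' : Fin n → ℝ, PhiMap v y' = c ∧ (fun j => (c j : ℝ)) - phiMap v y' = z := by
  have hmem : z - (fun j => (c j : ℝ)) ∈ LinearMap.range (phiMap v) :=
    (Submodule.Quotient.eq _).mp hπ
  obtain ⟨u, hu⟩ := hmem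
  refine ⟨-u, ?_, ?_⟩
  · funext j
    have hj : phiMap v (-u) j = (c j : ℝ) - z j := by
      have := congrFun hu j
      simp only [map_neg, Pi.neg_apply, this, Pi.sub_apply]
      ring
    have hj' : (∑ i, (-u) i * (v j i : ℝ)) = (c j : ℝ) - z j := hj
    rw [PhiMap, hj']
    have h0 := (hz j).1
    have h1 := (hz j).2
    rw [Int.ceil_eq_iff]
    constructor <;> push_cast <;> linarith
  · funext j
    have := congrFun hu j
    simp only [map_neg, Pi.neg_apply, Pi.sub_apply, this]
    ring
end

section
/- Let c ∈ ℤ^k with S̃_c ≠ ∅ and let u ∈ S̃_c. Then span(S̃_c − u) = { w ∈ ℝ^n : ⟨w, v_j⟩ = 0 for all j ∈ J_c }; that is, the linear span of the translated lifted stratum equals the common kernel of the linear functionals ⟨·, v_j⟩ for j ∈ J_c. -/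
/-- For `u ∈ S̃_c`, the linear span of `S̃_c − u` equals the common kernel of the functionals
`⟨·, v_j⟩` for `j ∈ J_c`. -/
theorem stmt8 {n k : ℕ} (v : Fin k → Fin n → ℤ) (c : Fin k → ℤ)
    (hc : ({y : Fin n → ℝ | PhiMap v y = c}).Nonempty)
    (u : Fin n → ℝ) (hu : PhiMap v u = c) :
    (Submodule.span ℝ ((fun s => s - u) '' {y : Fin n → ℝ | PhiMap v y = c}) :
        Set (Fin n → ℝ)) =
      {w : Fin n → ℝ | ∀ j, (∀ y ∈ {y : Fin n → ℝ | PhiMap v y = c},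
        ∃ m : ℤ, phiMap v y j = (m : ℝ)) → phiMap v w j = 0} := by
  classical
  set φ := phiMap v with hφdef
  set S : Set (Fin n → ℝ) := {y : Fin n → ℝ | PhiMap v y = c} with hSdef
  set P : Fin k → Prop := fun j => ∀ y ∈ S, ∃ m : ℤ, φ y j = (m : ℝ) with hPdef
  have memS : ∀ y : Fin n → ℝ, y ∈ S ↔
      ∀ j, ((c j : ℝ) - 1 < φ y j ∧ φ y j ≤ (c j : ℝ)) := by
    intro y
    have h1 : y ∈ S ↔ ∀ j, ⌈φ y j⌉ = c j := by
      simp [hSdef, PhiMap, funext_iff, hφdef, phiMap]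
    rw [h1]
    exact forall_congr' fun j => Int.ceil_eq_iff
  have huS : u ∈ S := hu
  -- for j ∈ J_c, φ y j = c j for all y ∈ S
  have memB : ∀ j, P j → ∀ y ∈ S, φ y j = (c j : ℝ) := by
    intro j hPj y hy
    obtain ⟨m, hm⟩ := hPj y hy
    have hceil : ⌈φ y j⌉ = c j := congrFun hy j
    rw [hm] at hceil
    rw [Int.ceil_intCast] at hceil
    rw [hm, hceil]
  -- the common kernel as a submodule
  let K : Submodule ℝ (Fin n → ℝ) :=
    { carrier := {w | ∀ j, P j → φ w j = 0}
      add_mem' := by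
        intro a b ha hb j hj
        have : φ (a + b) j = φ a j + φ b j := by rw [map_add]; rfl
        rw [this, ha j hj, hb j hj, add_zero]
      zero_mem' := by
        intro j _
        rw [map_zero]; rfl
      smul_mem' := by
        intro r a ha j hj
        have : φ (r • a) j = r * φ a j := by rw [map_smul]; rfl
        rw [this, ha j hj, mul_zero] }
  have hsub1 : Submodule.span ℝ ((fun s => s - u) '' S) ≤ K := by
    rw [Submodule.span_le]
    rintro x ⟨y, hy, rfl⟩ j hj
    have : φ (y - u) j = φ y j - φ u j := by rw [map_sub]; rfl
    show φ (y - u) j = 0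
    rw [this, memB j hj y hy, memB j hj u huS, sub_self]
  refine Set.Subset.antisymm (fun x hx => hsub1 hx) ?_
  intro w hw
  have hw' : ∀ j, P j → φ w j = 0 := hw
  -- pick witnesses with strict upper bound when j ∉ J_c
  have hY : ∀ j, ∃ y, y ∈ S ∧ (¬ P j → φ y j < (c j : ℝ)) := by
    intro j
    by_cases hPj : P j
    · exact ⟨u, huS, fun h => absurd hPj h⟩
    · have hPj' : ∃ y ∈ S, ¬ ∃ m : ℤ, φ y j = (m : ℝ) := by
        by_contra hcon
        push_neg at hcon
        exact hPj hcon
      obtain ⟨y, hy, hny⟩ := hPj'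
      refine ⟨y, hy, fun _ => ?_⟩
      have hle := ((memS y).mp hy j).2
      rcases lt_or_eq_of_le hle with h | h
      · exact h
      · exact absurd ⟨c j, h⟩ hny
  choose Y hYS hYlt using hY
  set z : Fin n → ℝ := ((k : ℝ) + 1)⁻¹ • (u + ∑ j, Y j) with hzdef
  have hk1 : (0 : ℝ) < (k : ℝ) + 1 := by positivity
  have hzval : ∀ j, φ z j = ((k : ℝ) + 1)⁻¹ * (φ u j + ∑ j', φ (Y j') j) := by
    intro j
    have h1 : φ z = ((k : ℝ) + 1)⁻¹ • (φ u + ∑ j', φ (Y j')) := by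
      rw [hzdef, map_smul, map_add, map_sum]
    rw [h1]
    simp [Finset.sum_apply]
  clear_value z
  -- bounds for φ z j
  have hzub : ∀ j, φ z j ≤ (c j : ℝ) := by
    intro j
    rw [hzval j, inv_mul_le_iff₀ hk1]
    have h1 : φ u j ≤ (c j : ℝ) := ((memS u).mp huS j).2
    have h2 : ∑ j', φ (Y j') j ≤ ∑ _j' : Fin k, (c j : ℝ) :=
      Finset.sum_le_sum fun j' _ => ((memS (Y j')).mp (hYS j') j).2
    simp only [Finset.sum_const, Finset.card_univ, Fintype.card_fin, nsmul_eq_mul] at h2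
    nlinarith
  have hzlb : ∀ j, (c j : ℝ) - 1 < φ z j := by
    intro j
    rw [hzval j, lt_inv_mul_iff₀ hk1]
    have h1 : (c j : ℝ) - 1 < φ u j := ((memS u).mp huS j).1
    have h2 : ∑ _j' : Fin k, ((c j : ℝ) - 1) ≤ ∑ j', φ (Y j') j :=
      Finset.sum_le_sum fun j' _ => le_of_lt ((memS (Y j')).mp (hYS j') j).1
    simp only [Finset.sum_const, Finset.card_univ, Fintype.card_fin, nsmul_eq_mul] at h2
    nlinarith
  have hzS : z ∈ S := (memS z).mpr fun j => ⟨hzlb j, hzub j⟩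
  have hzeq : ∀ j, P j → φ z j = (c j : ℝ) := fun j hj => memB j hj z hzS
  have hzsub : ∀ j, ¬ P j → φ z j < (c j : ℝ) := by
    intro j hj
    rw [hzval j, inv_mul_lt_iff₀ hk1]
    have h1 : φ u j ≤ (c j : ℝ) := ((memS u).mp huS j).2
    have h2 : ∑ j', φ (Y j') j < ∑ _j' : Fin k, (c j : ℝ) := by
      refine Finset.sum_lt_sum (fun j' _ => ((memS (Y j')).mp (hYS j') j).2) ?_
      exact ⟨j, Finset.mem_univ j, hYlt j hj⟩
    simp only [Finset.sum_const, Finset.card_univ, Fintype.card_fin, nsmul_eq_mul] at h2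
    nlinarith
  -- choose ε
  set δ : Fin k → ℝ := fun j =>
    if P j then 1 else min ((c j : ℝ) - φ z j) (φ z j - ((c j : ℝ) - 1)) with hδdef
  have hδpos : ∀ j, 0 < δ j := by
    intro j
    simp only [hδdef]
    by_cases hPj : P j
    · rw [if_pos hPj]; norm_num
    · rw [if_neg hPj, lt_min_iff]
      exact ⟨by linarith [hzsub j hPj], by linarith [hzlb j]⟩
  set F : Finset ℝ := insert (1 : ℝ) (Finset.univ.image fun j => δ j / (|φ w j| + 1))
    with hFdef
  have hFne : F.Nonempty := ⟨1, Finset.mem_insert_self _ _⟩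
  set ε : ℝ := F.min' hFne with hεdef
  have hεpos : 0 < ε := by
    rw [hεdef, Finset.lt_min'_iff]
    intro y hy
    rw [hFdef] at hy
    rcases Finset.mem_insert.mp hy with h | h
    · rw [h]; norm_num
    · obtain ⟨j, _, rfl⟩ := Finset.mem_image.mp h
      have := hδpos j
      positivity
  have hεle : ∀ j, ε ≤ δ j / (|φ w j| + 1) := by
    intro j
    refine Finset.min'_le _ _ ?_
    rw [hFdef]
    exact Finset.mem_insert_of_mem (Finset.mem_image.mpr ⟨j, Finset.mem_univ j, rfl⟩)
  have hkey : ∀ j, |ε * φ w j| < δ j := by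
    intro j
    have h0 : (0 : ℝ) < |φ w j| + 1 := by positivity
    have h1 : ε * (|φ w j| + 1) ≤ δ j := by
      rw [← le_div_iff₀ h0]; exact hεle j
    have h2 : |ε * φ w j| = ε * |φ w j| := by
      rw [abs_mul, abs_of_pos hεpos]
    rw [h2]
    nlinarith
  clear hεle hεdef
  clear_value ε
  -- z + ε • w ∈ S
  have hval : ∀ j, φ (z + ε • w) j = φ z j + ε * φ w j := by
    intro j
    have h : φ (z + ε • w) = φ z + ε • φ w := by
      rw [map_add, map_smul]
    rw [h]; rfl
  have hzεS : z + ε • w ∈ S := by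
    rw [memS]
    intro j
    rw [hval j]
    by_cases hPj : P j
    · rw [hw' j hPj, mul_zero, add_zero, hzeq j hPj]
      exact ⟨by linarith, le_refl _⟩
    · have hk := hkey j
      simp only [hδdef] at hk
      rw [if_neg hPj] at hk
      rw [abs_lt] at hk
      have hm1 : -(min ((c j : ℝ) - φ z j) (φ z j - ((c j : ℝ) - 1))) < ε * φ w j := hk.1
      have hm2 : ε * φ w j < min ((c j : ℝ) - φ z j) (φ z j - ((c j : ℝ) - 1)) := hk.2
      have ha := min_le_left ((c j : ℝ) - φ z j) (φ z j - ((c j : ℝ) - 1))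
      have hb := min_le_right ((c j : ℝ) - φ z j) (φ z j - ((c j : ℝ) - 1))
      exact ⟨by linarith, le_of_lt (by linarith)⟩
  -- conclude
  have h1 : z + ε • w - u ∈ Submodule.span ℝ ((fun s => s - u) '' S) :=
    Submodule.subset_span ⟨z + ε • w, hzεS, rfl⟩
  have h2 : z - u ∈ Submodule.span ℝ ((fun s => s - u) '' S) :=
    Submodule.subset_span ⟨z, hzS, rfl⟩
  have h3 := Submodule.sub_mem _ h1 h2
  have h4 : (z + ε • w - u) - (z - u) = ε • w := by abel
  rw [h4] at h3
  have h5 := Submodule.smul_mem _ ε⁻¹ h3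
  rw [smul_smul, inv_mul_cancel₀ (ne_of_gt hεpos), one_smul] at h5
  exact SetLike.mem_coe.mpr h5
end

section
/- Let c, c' ∈ ℤ^k with S̃_c ≠ ∅ and S̃_{c'} ≠ ∅, and suppose J_c = J_{c'}. Then the minimal face of Z containing π(c) equals the minimal face of Z containing π(c'); i.e., the minimal face corresponding to a Φ-stratum is entirely determined by its set J. -/
/-- The set `J_c` of indices `j` such that `⟨y, v_j⟩ ∈ ℤ` for every `y` in the lifted stratum
`S̃_c`. -/
noncomputable def Jset {n k : ℕ} (v : Fin k → Fin n → ℤ) (c : Fin k → ℤ) : Set (Fin k) :=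
  {j | ∀ y ∈ {y : Fin n → ℝ | PhiMap v y = c}, ∃ m : ℤ, phiMap v y j = (m : ℝ)}

/-- The minimal face of a set `C` containing `p`: the intersection of all extreme subsets of `C`
containing `p`. -/
def minFace {V : Type*} [AddCommGroup V] [Module ℝ V] (C : Set V) (p : V) : Set V :=
  ⋂₀ {F : Set V | IsExtreme ℝ C F ∧ p ∈ F}

/-! Choose `y ∈ S̃_c` with `⟨y, v_j⟩ < c_j` for every `j ∉ J_c` (an average of one witness per
such `j`, the stratum being convex) and any `y' ∈ S̃_{c'}`. Then `x = c - φ(y)` and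
`x' = c' - φ(y')` lie in `[0,1)^k` with `π(x) = π(c)`, `π(x') = π(c')`, and because
`J_c = J_{c'}` every zero coordinate of `x` is a zero coordinate of `x'`. Hence the ray from `x'`
through `x` stays in `[0,1)^k` a little beyond `x`, so `x` lies in an open segment of the cube
with endpoint `x'`: every face of `Z` containing `π(c)` contains `π(c')`, and symmetrically. -/

open Set Filter Topology

theorem Convex.exists_forall_lt_of_convexOn {ι E : Type*} [Finite ι] [AddCommGroup E]
    [Module ℝ E] {S : Set E} (hne : S.Nonempty) {f : ι → E → ℝ} (hf : ∀ j, ConvexOn ℝ S (f j))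
    {b : ι → ℝ} (hle : ∀ j, ∀ y ∈ S, f j y ≤ b j) (hlt : ∀ j, ∃ w ∈ S, f j w < b j) :
    ∃ y ∈ S, ∀ j, f j y < b j := by
  cases isEmpty_or_nonempty ι with
  | inl _ => exact hne.imp fun y hy => ⟨hy, isEmptyElim⟩
  | inr hι =>
    cases nonempty_fintype ι
    choose w hwS hw using hlt
    set m : ℝ := (Fintype.card ι : ℝ)
    have hm : 0 < m := by simpa [m] using Fintype.card_pos
    have hwt : ∑ _j : ι, m⁻¹ = 1 := by simp [m, hm.ne']
    refine ⟨∑ i, m⁻¹ • w i, (hf hι.some).1.sum_mem (fun _ _ => by positivity) hwt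
      (fun i _ => hwS i), fun j => ?_⟩
    calc f j (∑ i, m⁻¹ • w i) ≤ ∑ i, m⁻¹ • f j (w i) :=
          (hf j).map_sum_le (fun _ _ => by positivity) hwt fun i _ => hwS i
      _ < ∑ _i : ι, m⁻¹ • b j :=
          Finset.sum_lt_sum
            (fun i _ => smul_le_smul_of_nonneg_left (hle j _ (hwS i)) (by positivity))
            ⟨j, Finset.mem_univ _, smul_lt_smul_of_pos_left (hw j) (by positivity)⟩
      _ = b j := by rw [← Finset.sum_smul, hwt, one_smul]

theorem exists_mem_openSegment_of_zero_imp_zero {ι : Type*} [Finite ι] {x x' : ι → ℝ}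
    (hx : ∀ j, x j ∈ Ico (0 : ℝ) 1) (hz : ∀ j, x j = 0 → x' j = 0) :
    ∃ b : ι → ℝ, (∀ j, b j ∈ Ico (0 : ℝ) 1) ∧ x ∈ openSegment ℝ x' b := by
  have hev : ∀ᶠ ε in 𝓝 (0 : ℝ), ∀ j, x j + ε * (x j - x' j) ∈ Ico (0 : ℝ) 1 := by
    refine eventually_all.2 fun j => ?_
    rcases (hx j).1.eq_or_lt with h0 | hpos
    · exact Eventually.of_forall fun ε => by simp [← h0, hz j h0.symm]
    · have hcont : Tendsto (fun ε : ℝ => x j + ε * (x j - x' j)) (𝓝 0) (𝓝 (x j)) := by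
        simpa using ((tendsto_id (x := 𝓝 (0 : ℝ))).mul_const (x j - x' j)).const_add (x j)
      exact (hcont.eventually (Ioo_mem_nhds hpos (hx j).2)).mono fun _ h => Ioo_subset_Ico_self h
  obtain ⟨ε, hb, hε⟩ := ((hev.filter_mono nhdsWithin_le_nhds).and
    (self_mem_nhdsWithin : Ioi (0 : ℝ) ∈ 𝓝[>] 0)).exists
  refine ⟨x + ε • (x - x'), hb, ε / (1 + ε), 1 / (1 + ε), by positivity, by positivity,
    by field_simp; ring, ?_⟩
  funext j
  simp only [Pi.add_apply, Pi.smul_apply, Pi.sub_apply, smul_eq_mul]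
  field_simp
  ring

theorem IsExtreme.apply_mem_of_zero_imp_zero {ι W : Type*} [Finite ι] [AddCommGroup W]
    [Module ℝ W] (L : (ι → ℝ) →ₗ[ℝ] W) {F : Set W}
    (hF : IsExtreme ℝ (L '' {x | ∀ j, x j ∈ Ico (0 : ℝ) 1}) F) {x x' : ι → ℝ}
    (hx : ∀ j, x j ∈ Ico (0 : ℝ) 1) (hx' : ∀ j, x' j ∈ Ico (0 : ℝ) 1)
    (hz : ∀ j, x j = 0 → x' j = 0) (hxF : L x ∈ F) : L x' ∈ F := by
  obtain ⟨b, hb, hxb⟩ := exists_mem_openSegment_of_zero_imp_zero hx hz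
  refine hF.left_mem_of_mem_openSegment ⟨x', hx', rfl⟩ ⟨b, hb, rfl⟩ hxF ?_
  have := mem_image_of_mem L.toAffineMap hxb
  rwa [image_openSegment] at this

theorem minFace_congr {V : Type*} [AddCommGroup V] [Module ℝ V] {C : Set V} {p q : V}
    (h : ∀ F, IsExtreme ℝ C F → (p ∈ F ↔ q ∈ F)) : minFace C p = minFace C q := by
  unfold minFace
  congr 1
  ext F
  exact and_congr_right (h F)

theorem Submodule.mkQ_sub_range_apply {R M N : Type*} [Ring R] [AddCommGroup M] [Module R M]
    [AddCommGroup N] [Module R N] (f : M →ₗ[R] N) (z : N) (y : M) :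
    (LinearMap.range f).mkQ (z - f y) = (LinearMap.range f).mkQ z := by
  simp

def liftedStratum {n k : ℕ} (v : Fin k → Fin n → ℤ) (c : Fin k → ℤ) : Set (Fin n → ℝ) :=
  {y | PhiMap v y = c}

section Stratum

variable {n k : ℕ} {v : Fin k → Fin n → ℤ} {c : Fin k → ℤ} {y : Fin n → ℝ}

theorem mem_liftedStratum_iff :
    y ∈ liftedStratum v c ↔ ∀ j, phiMap v y j ∈ Ioc ((c j : ℝ) - 1) (c j) := by
  simp only [liftedStratum, mem_ofPred_eq, funext_iff, mem_Ioc]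
  exact forall_congr' fun j => Int.ceil_eq_iff

theorem convex_liftedStratum : Convex ℝ (liftedStratum v c) := by
  have : liftedStratum v c = phiMap v ⁻¹' univ.pi fun j => Ioc ((c j : ℝ) - 1) (c j) := by
    ext y
    simp [mem_liftedStratum_iff]
  rw [this]
  exact (convex_pi fun j _ => convex_Ioc _ _).linear_preimage _

theorem sub_phiMap_mem_Ico (hy : y ∈ liftedStratum v c) (j : Fin k) :
    (c j : ℝ) - phiMap v y j ∈ Ico (0 : ℝ) 1 := by
  obtain ⟨h1, h2⟩ := mem_liftedStratum_iff.1 hy j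
  constructor <;> linarith

theorem phiMap_eq_of_mem_Jset (hy : y ∈ liftedStratum v c) {j : Fin k} (hj : j ∈ Jset v c) :
    phiMap v y j = c j := by
  obtain ⟨m, hm⟩ := hj y hy
  have hceil : ⌈phiMap v y j⌉ = c j := congr_fun hy j
  rw [hm, Int.ceil_intCast] at hceil
  rw [hm, hceil]

theorem exists_phiMap_lt_of_notMem_Jset {j : Fin k} (hj : j ∉ Jset v c) :
    ∃ w ∈ liftedStratum v c, phiMap v w j < c j := by
  simp only [Jset, mem_ofPred_eq, not_forall] at hj
  obtain ⟨w, hw, hnot⟩ := hj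
  exact ⟨w, hw, ((mem_liftedStratum_iff.1 hw j).2).lt_of_ne fun h => hnot ⟨c j, h⟩⟩

theorem exists_mem_liftedStratum_phiMap_lt_of_notMem_Jset (hc : (liftedStratum v c).Nonempty) :
    ∃ y ∈ liftedStratum v c, ∀ j ∉ Jset v c, phiMap v y j < c j := by
  obtain ⟨y, hy, hlt⟩ := Convex.exists_forall_lt_of_convexOn (ι := {j // j ∉ Jset v c}) hc
    (f := fun j y => phiMap v y j) (b := fun j => c j)
    (fun j => ((LinearMap.proj j.1).comp (phiMap v)).convexOn convex_liftedStratum)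
    (fun j y hy => (mem_liftedStratum_iff.1 hy j).2)
    (fun j => exists_phiMap_lt_of_notMem_Jset j.2)
  exact ⟨y, hy, fun j hj => hlt ⟨j, hj⟩⟩

theorem mkQ_mem_face_of_Jset_eq {c' : Fin k → ℤ} (hc : (liftedStratum v c).Nonempty)
    (hc' : (liftedStratum v c').Nonempty) (hJ : Jset v c = Jset v c')
    {F : Set ((Fin k → ℝ) ⧸ LinearMap.range (phiMap v))}
    (hF : IsExtreme ℝ ((LinearMap.range (phiMap v)).mkQ '' {x | ∀ j, x j ∈ Ico (0 : ℝ) 1}) F)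
    (hcF : (LinearMap.range (phiMap v)).mkQ (fun j => (c j : ℝ)) ∈ F) :
    (LinearMap.range (phiMap v)).mkQ (fun j => (c' j : ℝ)) ∈ F := by
  obtain ⟨y, hy, hgen⟩ := exists_mem_liftedStratum_phiMap_lt_of_notMem_Jset hc
  obtain ⟨y', hy'⟩ := hc'
  have hzero : ∀ j, (c j : ℝ) - phiMap v y j = 0 → (c' j : ℝ) - phiMap v y' j = 0 := by
    intro j h
    have hj : j ∈ Jset v c' := hJ ▸ by_contra fun hj => (hgen j hj).ne (by linarith)
    rw [phiMap_eq_of_mem_Jset hy' hj, sub_self]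
  rw [← Submodule.mkQ_sub_range_apply _ _ y] at hcF
  rw [← Submodule.mkQ_sub_range_apply _ _ y']
  exact hF.apply_mem_of_zero_imp_zero _ (sub_phiMap_mem_Ico hy) (sub_phiMap_mem_Ico hy') hzero hcF

end Stratum

/-- The minimal face corresponding to a `Φ`-stratum is entirely determined by its set `J`: if
`J_c = J_{c'}`, then the minimal faces of `Z` containing `π(c)` and `π(c')` coincide. -/
theorem stmt11 {n k : ℕ} (v : Fin k → Fin n → ℤ) (c c' : Fin k → ℤ)
    (hc : ({y : Fin n → ℝ | PhiMap v y = c}).Nonempty)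
    (hc' : ({y : Fin n → ℝ | PhiMap v y = c'}).Nonempty)
    (hJ : Jset v c = Jset v c') :
    minFace ((LinearMap.range (phiMap v)).mkQ '' {x : Fin k → ℝ | ∀ j, x j ∈ Set.Ico (0 : ℝ) 1})
        ((LinearMap.range (phiMap v)).mkQ (fun j => (c j : ℝ))) =
      minFace ((LinearMap.range (phiMap v)).mkQ '' {x : Fin k → ℝ | ∀ j, x j ∈ Set.Ico (0 : ℝ) 1})
        ((LinearMap.range (phiMap v)).mkQ (fun j => (c' j : ℝ))) :=
  minFace_congr fun _ hF =>
    ⟨mkQ_mem_face_of_Jset_eq hc hc' hJ hF, mkQ_mem_face_of_Jset_eq hc' hc hJ.symm hF⟩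
end

section
/- Let c ∈ ℤ^k with S̃_c ≠ ∅, let J = J_c, let W = { w ∈ ℝ^n : ⟨w, v_j⟩ = 0 for all j ∈ J }, and let k' = k − |J|. Let φ̃ : W → ℝ^{k'} be the linear map given by pairing with the v_j for j ∉ J (in increasing order of j), let π̃ : ℝ^{k'} → ℝ^{k'}/im(φ̃) be the quotient map, let ι : ℝ^{k'} → ℝ^k be the linear inclusion into the coordinates not in J (inserting 0 in the coordinates indexed by J), and let ι̃ : ℝ^{k'}/im(φ̃) → ℝ^k/im(φ) be the linear map induced by ι (well-defined since ι(im(φ̃)) ⊆ im(φ)). Then ι̃ is injective, and ι̃( π̃([0,1)^{k'}) ) equals the minimal face of Z containing p = π(c). -/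
/-!
Choose a point `y` of the stratum with `c_j - ⟨y, v_j⟩ > 0` for every `j ∉ J` (a convex
combination of witnesses for the individual indices). Perturbing `y` inside the stratum shows
that a vector of `im φ` which is nonnegative on `J` vanishes on `J`; hence the face of the cube
on which the coordinates in `J` vanish maps onto an extreme subset of `Z`. It contains
`p = π(c - φ y)`, and because `c - φ y` is positive off `J`, every point of this face is the
endpoint of an open segment in `Z` through `p`, so any extreme subset containing `p` contains the
whole face. Finally `ι` is extension by zero, whose image of the cube is exactly that face, and
`ι̃` is injective because a preimage under `φ` of an extension by zero lies in `W`.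
-/

open Filter Topology Set Function

def halfOpenCube (ι : Type*) : Set (ι → ℝ) := {x | ∀ j, x j ∈ Ico (0 : ℝ) 1}

section HalfOpenCube

variable {ι : Type*}

def cubeFace (J : Set ι) : Set (ι → ℝ) := {a ∈ halfOpenCube ι | ∀ j ∈ J, a j = 0}

theorem convex_halfOpenCube : Convex ℝ (halfOpenCube ι) :=
  fun _ hx _ hy _ _ ha hb hab j => convex_Ico 0 1 (hx j) (hy j) ha hb hab

theorem exists_mem_halfOpenCube_mem_openSegment [Finite ι] {x y : ι → ℝ}
    (hy : y ∈ halfOpenCube ι) (hxy : ∀ j, y j = 0 → x j = 0) :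
    ∃ z ∈ halfOpenCube ι, y ∈ openSegment ℝ x z := by
  have hz : ∀ᶠ s in 𝓝[>] (0 : ℝ), y + s • (y - x) ∈ halfOpenCube ι := by
    refine eventually_all.2 fun j => ?_
    rcases (hy j).1.eq_or_lt with hyj | hyj
    · refine Eventually.of_forall fun s => ?_
      simp [← hyj, hxy j hyj.symm]
    · have hlim : Tendsto (fun s : ℝ => y j + s * (y j - x j)) (𝓝[>] 0) (𝓝 (y j)) :=
        tendsto_nhdsWithin_of_tendsto_nhds <|
          (continuous_const.add (continuous_id.mul continuous_const)).tendsto' 0 _ (by simp)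
      exact (hlim.eventually (Ioo_mem_nhds hyj (hy j).2)).mono fun _ hs =>
        Ioo_subset_Ico_self hs
  obtain ⟨s, hs, hs0⟩ := (hz.and self_mem_nhdsWithin).exists
  refine ⟨_, hs, mem_openSegment_iff_div.2 ⟨s, 1, hs0, one_pos, ?_⟩⟩
  have : s + 1 ≠ 0 := by positivity
  ext j
  simp only [Pi.add_apply, Pi.smul_apply, Pi.sub_apply, smul_eq_mul]
  field_simp
  ring

variable (K : Submodule ℝ (ι → ℝ)) {J : Set ι}

theorem isExtreme_mkQ_image_cubeFace (hK : ∀ w ∈ K, (∀ j ∈ J, 0 ≤ w j) → ∀ j ∈ J, w j = 0) :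
    IsExtreme ℝ (K.mkQ '' halfOpenCube ι) (K.mkQ '' cubeFace J) := by
  refine ⟨image_mono (sep_subset _ _), ?_⟩
  rintro _ ⟨a, ha, rfl⟩ _ ⟨b, hb, rfl⟩ _ ⟨x, hx, rfl⟩ ⟨s, t, hs, ht, -, hsum⟩
  have hw : s • a + t • b - x ∈ K := by
    rw [← Submodule.Quotient.eq]
    simpa using hsum
  have hw_nonneg : ∀ j ∈ J, 0 ≤ (s • a + t • b - x) j := fun j hj => by
    simpa [hx.2 j hj] using add_nonneg (mul_nonneg hs.le (ha j).1) (mul_nonneg ht.le (hb j).1)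
  refine ⟨a, ⟨ha, fun j hj => ?_⟩, rfl⟩
  have hwj := hK _ hw hw_nonneg j hj
  simp only [Pi.sub_apply, Pi.add_apply, Pi.smul_apply, smul_eq_mul, hx.2 j hj, sub_zero] at hwj
  nlinarith [(ha j).1, (hb j).1]

theorem minFace_mkQ_image_halfOpenCube [Finite ι]
    (hK : ∀ w ∈ K, (∀ j ∈ J, 0 ≤ w j) → ∀ j ∈ J, w j = 0) {y : ι → ℝ} (hy : y ∈ cubeFace J)
    (hy_pos : ∀ j ∉ J, 0 < y j) :
    minFace (K.mkQ '' halfOpenCube ι) (K.mkQ y) = K.mkQ '' cubeFace J := by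
  refine Subset.antisymm (sInter_subset_of_mem ?_) (subset_sInter ?_)
  · exact ⟨isExtreme_mkQ_image_cubeFace K hK, mem_image_of_mem _ hy⟩
  rintro E ⟨hE, hyE⟩ _ ⟨x, hx, rfl⟩
  have hxy : ∀ j, y j = 0 → x j = 0 := fun j hyj =>
    hx.2 j (by_contra fun hj => (hy_pos j hj).ne' hyj)
  obtain ⟨z, hz, hyxz⟩ := exists_mem_halfOpenCube_mem_openSegment hy.1 hxy
  have hseg : K.mkQ y ∈ openSegment ℝ (K.mkQ x) (K.mkQ z) := by
    have h := image_openSegment ℝ K.mkQ.toAffineMap x z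
    simp only [LinearMap.coe_toAffineMap] at h
    exact h ▸ mem_image_of_mem _ hyxz
  exact hE.2 (mem_image_of_mem _ hx.1) (mem_image_of_mem _ hz) hyE hseg

end HalfOpenCube

section Stratum

variable {E ι : Type*} [AddCommGroup E] [Module ℝ E] (f : E →ₗ[ℝ] ι → ℝ) (c : ι → ℝ)

def stratum : Set E := {y | c - f y ∈ halfOpenCube ι}

def tightIndices : Set ι := {j | ∀ y ∈ stratum f c, f y j = c j}

variable {f c}

theorem le_of_mem_stratum {y : E} (hy : y ∈ stratum f c) (j : ι) : f y j ≤ c j :=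
  sub_nonneg.1 (hy j).1

theorem convex_stratum : Convex ℝ (stratum f c) := by
  intro y₁ hy₁ y₂ hy₂ a b ha hb hab
  have h := convex_halfOpenCube hy₁ hy₂ ha hb hab
  show c - f (a • y₁ + b • y₂) ∈ halfOpenCube ι
  convert h using 1
  rw [map_add, map_smul, map_smul]
  linear_combination (norm := module) (-hab) • c

theorem exists_mem_stratum_forall_lt [Finite ι] (hS : (stratum f c).Nonempty) :
    ∃ y ∈ stratum f c, ∀ j ∉ tightIndices f c, f y j < c j := by
  classical
  cases nonempty_fintype ι
  suffices ∀ s : Finset ι, ∃ y ∈ stratum f c, ∀ j ∈ s, j ∉ tightIndices f c → f y j < c j by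
    simpa using this Finset.univ
  intro s
  induction s using Finset.induction_on with
  | empty => exact ⟨hS.some, hS.some_mem, by simp⟩
  | insert j s _ ih =>
    obtain ⟨y, hy, hys⟩ := ih
    by_cases hj : j ∈ tightIndices f c
    · exact ⟨y, hy, by simpa [hj] using hys⟩
    obtain ⟨y', hy', hy'j⟩ : ∃ y' ∈ stratum f c, f y' j ≠ c j := by
      simpa [tightIndices] using hj
    refine ⟨(1 / 2 : ℝ) • y + (1 / 2 : ℝ) • y',
      convex_stratum hy hy' (by norm_num) (by norm_num) (by norm_num), ?_⟩
    have hlt := (le_of_mem_stratum hy' j).lt_of_ne hy'j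
    simp only [Finset.mem_insert, map_add, map_smul, Pi.add_apply, Pi.smul_apply, smul_eq_mul]
    rintro i (rfl | hi) hiT
    · linarith [le_of_mem_stratum hy i]
    · linarith [hys i hi hiT, le_of_mem_stratum hy' i]

theorem eq_zero_of_nonneg_on_tightIndices [Finite ι] (hS : (stratum f c).Nonempty) {u : E}
    (hu : ∀ j ∈ tightIndices f c, 0 ≤ f u j) : ∀ j ∈ tightIndices f c, f u j = 0 := by
  obtain ⟨y, hy, hy_lt⟩ := exists_mem_stratum_forall_lt hS
  have hperturb : ∀ᶠ t in 𝓝[>] (0 : ℝ), y - t • u ∈ stratum f c := by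
    refine eventually_all.2 fun j => ?_
    have hlim : Tendsto (fun t : ℝ => (c j - f y j) + t * f u j) (𝓝[>] 0) (𝓝 (c j - f y j)) :=
      tendsto_nhdsWithin_of_tendsto_nhds <|
        (continuous_const.add (continuous_id.mul continuous_const)).tendsto' 0 _ (by simp)
    have hlt_one : ∀ᶠ t in 𝓝[>] (0 : ℝ), (c j - f y j) + t * f u j < 1 :=
      hlim.eventually (gt_mem_nhds (hy j).2)
    have hnonneg : ∀ᶠ t in 𝓝[>] (0 : ℝ), 0 ≤ (c j - f y j) + t * f u j := by
      by_cases hj : j ∈ tightIndices f c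
      · filter_upwards [self_mem_nhdsWithin] with t ht
        rw [hj y hy, sub_self, zero_add]
        exact mul_nonneg (le_of_lt ht) (hu j hj)
      · exact (hlim.eventually (lt_mem_nhds (sub_pos.2 (hy_lt j hj)))).mono fun _ h => h.le
    filter_upwards [hlt_one, hnonneg] with t h₁ h₀
    simp only [map_sub, map_smul, Pi.sub_apply, Pi.smul_apply, smul_eq_mul]
    constructor <;> linarith
  obtain ⟨t, ht, ht0⟩ := (hperturb.and self_mem_nhdsWithin).exists
  intro j hj
  have h := hj _ ht
  rw [map_sub, map_smul, Pi.sub_apply, Pi.smul_apply, smul_eq_mul, ← hj y hy] at h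
  exact (mul_eq_zero.1 (by linarith : t * f u j = 0)).resolve_left (ne_of_gt ht0)

theorem minFace_mkQ_range_eq [Finite ι] (hS : (stratum f c).Nonempty) :
    minFace ((LinearMap.range f).mkQ '' halfOpenCube ι) ((LinearMap.range f).mkQ c) =
      (LinearMap.range f).mkQ '' cubeFace (tightIndices f c) := by
  obtain ⟨y, hy, hy_lt⟩ := exists_mem_stratum_forall_lt hS
  have hc : (LinearMap.range f).mkQ c = (LinearMap.range f).mkQ (c - f y) := by
    simp only [Submodule.mkQ_apply, Submodule.Quotient.eq, sub_sub_cancel]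
    exact LinearMap.mem_range_self f y
  rw [hc]
  refine minFace_mkQ_image_halfOpenCube _ ?_ ⟨hy, fun j hj => ?_⟩ fun j hj => ?_
  · rintro _ ⟨u, rfl⟩
    exact eq_zero_of_nonneg_on_tightIndices hS
  · rw [Pi.sub_apply, hj y hy, sub_self]
  · exact sub_pos.2 (hy_lt j hj)

end Stratum

section ExtendByZero

variable {R κ ι : Type*} {g : κ → ι}

theorem sum_single_comp_proj_eq_extendByZero [Semiring R] [Fintype κ] [DecidableEq ι]
    (hg : Injective g) :
    ∑ i, (LinearMap.single R (fun _ : ι => R) (g i)).comp (LinearMap.proj i) =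
      ExtendByZero.linearMap R g := by
  refine LinearMap.ext fun x => funext fun j => ?_
  simp only [LinearMap.sum_apply, Finset.sum_apply, LinearMap.comp_apply, LinearMap.proj_apply,
    LinearMap.coe_single, ExtendByZero.linearMap_apply]
  by_cases hj : ∃ i, g i = j
  · obtain ⟨i, rfl⟩ := hj
    rw [hg.extend_apply, Finset.sum_eq_single i (fun i' _ hi' => by simp [hg.ne hi'])
      (by simp)]
    simp
  · rw [extend_apply' _ _ _ hj, Finset.sum_eq_zero fun i _ => ?_]
    · rfl
    · exact Pi.single_eq_of_ne (fun h => hj ⟨i, h.symm⟩) _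

theorem image_extendByZero_halfOpenCube (hg : Injective g) :
    ExtendByZero.linearMap ℝ g '' halfOpenCube κ = cubeFace (range g)ᶜ := by
  ext a
  constructor
  · rintro ⟨x, hx, rfl⟩
    refine ⟨fun j => ?_, fun j hj => extend_apply' _ _ _ hj⟩
    by_cases hj : ∃ i, g i = j
    · obtain ⟨i, rfl⟩ := hj
      simpa [hg.extend_apply] using hx i
    · simp [extend_apply' _ _ _ hj]
  · rintro ⟨ha, ha_zero⟩
    refine ⟨a ∘ g, fun i => ha (g i), funext fun j => ?_⟩
    by_cases hj : ∃ i, g i = j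
    · obtain ⟨i, rfl⟩ := hj
      exact hg.extend_apply _ _ _
    · rw [ExtendByZero.linearMap_apply, extend_apply' _ _ _ hj, ha_zero j hj, Pi.zero_apply]

theorem injective_mapQ_extendByZero [Ring R] {E : Type*} [AddCommGroup E] [Module R E]
    (f : E →ₗ[R] ι → R) (hg : Injective g) {J : Set ι} (hJ : ∀ i, g i ∉ J) (h) :
    Injective ((LinearMap.range (((LinearMap.funLeft R R g).comp f).domRestrict
      (⨅ j ∈ J, LinearMap.ker ((LinearMap.proj j).comp f)))).mapQ (LinearMap.range f)
      (ExtendByZero.linearMap R g) h) := by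
  rw [← LinearMap.ker_eq_bot, Submodule.ker_mapQ, eq_bot_iff, Submodule.map_le_iff_le_comap,
    Submodule.comap_bot, Submodule.ker_mkQ]
  rintro x ⟨u, hu⟩
  have hu_apply : ∀ j, f u j = extend g x 0 j := fun j => congrFun hu j
  have hu_mem : u ∈ ⨅ j ∈ J, LinearMap.ker ((LinearMap.proj j).comp f) := by
    simp only [Submodule.mem_iInf, LinearMap.mem_ker, LinearMap.comp_apply, LinearMap.proj_apply]
    intro j hj
    rw [hu_apply, extend_apply' _ _ _ fun ⟨i, hi⟩ => hJ i (hi ▸ hj), Pi.zero_apply]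
  exact ⟨⟨u, hu_mem⟩, funext fun i => (hu_apply (g i)).trans (hg.extend_apply _ _ _)⟩

end ExtendByZero

section IntegerData

variable {n k : ℕ} (v : Fin k → Fin n → ℤ) (c : Fin k → ℤ)

theorem setOf_PhiMap_eq :
    {y | PhiMap v y = c} = stratum (phiMap v) (fun j => (c j : ℝ)) := by
  ext y
  refine funext_iff.trans (forall_congr' fun j => ?_)
  change ⌈phiMap v y j⌉ = c j ↔ (c j : ℝ) - phiMap v y j ∈ Ico 0 1
  rw [Int.ceil_eq_iff, mem_Ico]
  constructor <;> rintro ⟨h₁, h₂⟩ <;> constructor <;> linarith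

theorem Jset_eq_tightIndices :
    Jset v c = tightIndices (phiMap v) (fun j => (c j : ℝ)) := by
  ext j
  simp only [Jset, tightIndices, ← setOf_PhiMap_eq, mem_ofPred_eq]
  refine forall₂_congr fun y hy => ⟨?_, fun h => ⟨c j, h⟩⟩
  rintro ⟨m, hm⟩
  have hceil : ⌈phiMap v y j⌉ = c j := congrFun hy j
  rw [hm, Int.ceil_intCast] at hceil
  rw [hm, hceil]

end IntegerData

theorem stmt12_general {n k k' : ℕ} (v : Fin k → Fin n → ℤ) (c : Fin k → ℤ)
    (hc : ({y : Fin n → ℝ | PhiMap v y = c}).Nonempty)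
    (e : Fin k' ≃o {j : Fin k // j ∉ Jset v c}) :
    let J := Jset v c
    let W : Submodule ℝ (Fin n → ℝ) :=
      ⨅ j ∈ J, LinearMap.ker ((LinearMap.proj j).comp (phiMap v))
    let φt : ↥W →ₗ[ℝ] (Fin k' → ℝ) :=
      ((LinearMap.funLeft ℝ ℝ (fun j' => ((e j' : {j : Fin k // j ∉ J}) : Fin k))).comp
        (phiMap v)).domRestrict W
    let ι : (Fin k' → ℝ) →ₗ[ℝ] (Fin k → ℝ) :=
      ∑ j' : Fin k',
        (LinearMap.single ℝ (fun _ : Fin k => ℝ)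
          ((e j' : {j : Fin k // j ∉ J}) : Fin k)).comp (LinearMap.proj j')
    ∀ hcomp : LinearMap.range φt ≤ (LinearMap.range (phiMap v)).comap ι,
      Function.Injective (Submodule.mapQ (LinearMap.range φt) (LinearMap.range (phiMap v))
        ι hcomp) ∧
      (Submodule.mapQ (LinearMap.range φt) (LinearMap.range (phiMap v)) ι hcomp) ''
          ((LinearMap.range φt).mkQ '' {x : Fin k' → ℝ | ∀ j', x j' ∈ Set.Ico (0 : ℝ) 1}) =
        minFace
          ((LinearMap.range (phiMap v)).mkQ '' {x : Fin k → ℝ | ∀ j, x j ∈ Set.Ico (0 : ℝ) 1})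
          ((LinearMap.range (phiMap v)).mkQ (fun j => (c j : ℝ))) := by
  intro J W φt ι hcomp
  have hg : Injective fun j' => ((e j' : {j : Fin k // j ∉ J}) : Fin k) :=
    Subtype.val_injective.comp e.injective
  have hrange : (range fun j' => ((e j' : {j : Fin k // j ∉ J}) : Fin k))ᶜ =
      tightIndices (phiMap v) (fun j => (c j : ℝ)) := by
    ext j
    simp only [mem_compl_iff, mem_range, not_exists, ← Jset_eq_tightIndices]
    exact ⟨fun h => by_contra fun hj => h (e.symm ⟨j, hj⟩) (by simp),
      fun hj j' h => (e j').2 (h ▸ hj)⟩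
  have hι : ι = ExtendByZero.linearMap ℝ _ := sum_single_comp_proj_eq_extendByZero hg
  clear_value ι
  subst hι
  refine ⟨injective_mapQ_extendByZero _ hg (fun j' => (e j').2) hcomp, ?_⟩
  rw [image_image]
  change (LinearMap.range (phiMap v)).mkQ ∘ ExtendByZero.linearMap ℝ _ '' halfOpenCube (Fin k') = _
  rw [image_comp, image_extendByZero_halfOpenCube hg, hrange]
  rw [setOf_PhiMap_eq] at hc
  exact (minFace_mkQ_range_eq hc).symm

/-- Restricting the construction to `W = {w : ⟨w, v_j⟩ = 0 ∀ j ∈ J_c}`, with `φ̃` the pairing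
with the `v_j` for `j ∉ J_c` (in increasing order, via the order isomorphism `e`), `π̃` the
projection onto `coker φ̃`, `ι` the inclusion of `ℝ^{k'}` into the coordinates not in `J_c`, and
`ι̃` the induced map on cokernels: `ι̃` is injective and `ι̃(π̃([0,1)^{k'}))` is the minimal face
of `Z` containing `p = π(c)`. -/
theorem stmt12 {n k k' : ℕ} (v : Fin k → Fin n → ℤ) (c : Fin k → ℤ)
    (hc : ({y : Fin n → ℝ | PhiMap v y = c}).Nonempty)
    (e : Fin k' ≃o {j : Fin k // j ∉ Jset v c})
    (hk' : k' = k - (Jset v c).ncard) :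
    let J := Jset v c
    let W : Submodule ℝ (Fin n → ℝ) :=
      ⨅ j ∈ J, LinearMap.ker ((LinearMap.proj j).comp (phiMap v))
    let φt : ↥W →ₗ[ℝ] (Fin k' → ℝ) :=
      ((LinearMap.funLeft ℝ ℝ (fun j' => ((e j' : {j : Fin k // j ∉ J}) : Fin k))).comp
        (phiMap v)).domRestrict W
    let ι : (Fin k' → ℝ) →ₗ[ℝ] (Fin k → ℝ) :=
      ∑ j' : Fin k',
        (LinearMap.single ℝ (fun _ : Fin k => ℝ)
          ((e j' : {j : Fin k // j ∉ J}) : Fin k)).comp (LinearMap.proj j')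
    ∀ hcomp : LinearMap.range φt ≤ (LinearMap.range (phiMap v)).comap ι,
      Function.Injective (Submodule.mapQ (LinearMap.range φt) (LinearMap.range (phiMap v))
        ι hcomp) ∧
      (Submodule.mapQ (LinearMap.range φt) (LinearMap.range (phiMap v)) ι hcomp) ''
          ((LinearMap.range φt).mkQ '' {x : Fin k' → ℝ | ∀ j', x j' ∈ Set.Ico (0 : ℝ) 1}) =
        minFace
          ((LinearMap.range (phiMap v)).mkQ '' {x : Fin k → ℝ | ∀ j, x j ∈ Set.Ico (0 : ℝ) 1})
          ((LinearMap.range (phiMap v)).mkQ (fun j => (c j : ℝ))) :=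
  stmt12_general v c hc e
end

section
/- Suppose u ∈ ℝ^n satisfies ⟨u, v_j⟩ ∉ ℤ for every j ∈ {1,…,k}. Then π(Φ(u)) lies in the topological interior of the closed zonotope Z̄ = π([0,1]^k) inside the finite-dimensional topological vector space ℝ^k/im(φ). -/
/-!
Since `φ u ∈ im φ`, the point `π(Φ u)` equals `π(Φ u - φ u)`, and the coordinates
`⌈⟨u, v_j⟩⌉ - ⟨u, v_j⟩` of `Φ u - φ u` lie in the open interval `(0, 1)` because no `⟨u, v_j⟩`
is an integer. So `Φ u - φ u` is an interior point of the cube `[0,1]ᵏ`, and the quotient map,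
being open, sends interior points of the cube to interior points of the zonotope.
-/

theorem Int.ceil_sub_self_mem_Ioo {R : Type*} [Ring R] [LinearOrder R] [IsStrictOrderedRing R]
    [FloorRing R] {x : R} (hx : ¬ ∃ m : ℤ, x = m) : (⌈x⌉ : R) - x ∈ Set.Ioo 0 1 := by
  have hne : x ≠ ⌈x⌉ := fun he => hx ⟨⌈x⌉, he⟩
  exact ⟨sub_pos.2 ((Int.le_ceil x).lt_of_ne hne), sub_lt_iff_lt_add'.2 (Int.ceil_lt_add_one x)⟩

theorem mem_interior_unitCube {ι : Type*} [Finite ι] {x : ι → ℝ}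
    (hx : ∀ j, x j ∈ Set.Ioo 0 1) : x ∈ interior {x : ι → ℝ | ∀ j, x j ∈ Set.Icc 0 1} := by
  have hcube : {x : ι → ℝ | ∀ j, x j ∈ Set.Icc 0 1} = Set.univ.pi fun _ => Set.Icc 0 1 := by
    ext; simp only [Set.mem_ofPred_eq, Set.mem_pi, Set.mem_univ, true_implies]
  rw [hcube, interior_pi_set Set.finite_univ]
  simpa [interior_Icc] using hx

/-- If `⟨u, v_j⟩ ∉ ℤ` for every `j`, then `π(Φ(u))` lies in the topological interior of the
closed zonotope `Z̄ = π([0,1]ᵏ)` in the quotient space `ℝᵏ/im(φ)`. -/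
theorem stmt14 {n k : ℕ} (v : Fin k → Fin n → ℤ) (u : Fin n → ℝ)
    (h : ∀ j, ¬ ∃ m : ℤ, phiMap v u j = (m : ℝ)) :
    (LinearMap.range (phiMap v)).mkQ (fun j => (PhiMap v u j : ℝ)) ∈
      interior ((LinearMap.range (phiMap v)).mkQ ''
        {x : Fin k → ℝ | ∀ j, x j ∈ Set.Icc (0 : ℝ) 1}) := by
  set S := LinearMap.range (phiMap v)
  set w : Fin k → ℝ := (fun j => (PhiMap v u j : ℝ)) - phiMap v u
  have hπ : S.mkQ w = S.mkQ (fun j => (PhiMap v u j : ℝ)) := by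
    rw [map_sub, sub_eq_self, Submodule.mkQ_apply, Submodule.Quotient.mk_eq_zero]
    exact LinearMap.mem_range_self _ u
  have hw : w ∈ interior {x : Fin k → ℝ | ∀ j, x j ∈ Set.Icc 0 1} :=
    mem_interior_unitCube fun j => Int.ceil_sub_self_mem_Ioo (h j)
  rw [← hπ]
  exact (Submodule.isOpenMap_mkQ S).image_interior_subset _ ⟨w, hw, rfl⟩
end
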